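/- Let E be a real Hilbert space, e ∈ E a unit vector, and γ : ℝ → E a differentiable curve satisfying γ'(t) = -(e - ⟨e,γ(t)⟩·γ(t)) for all t ∈ ℝ, with ‖γ(0)‖ = 1 and γ(0) ≠ e and γ(0) ≠ -e. Then there exists exactly one t₀ ∈ ℝ such that ⟨e, γ(t₀)⟩ = 0. -/

import Mathlib

/-!
Along the flow the height `h t = ⟪e, γ t⟫` solves the Riccati equation `h' = h² - 1`.
Then `1 - h` and `1 + h` solve linear equations `g' = a g`, so they keep the positive sign they
have at `t = 0`, and `(1 + h) / (1 - h)` solves `r' = -2 r`. Hence it equals `r 0 * exp (-2 t)`,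
which takes the value `1`, i.e. `h = 0`, exactly once.
-/

open scoped RealInnerProductSpace
open Real Set

theorem eq_exp_sub_mul_of_hasDerivAt_eq_mul {a A g : ℝ → ℝ}
    (hA : ∀ t, HasDerivAt A (a t) t) (hg : ∀ t, HasDerivAt g (a t * g t) t) (t : ℝ) :
    g t = exp (A t - A 0) * g 0 := by
  have hconst : ∀ s, HasDerivAt (fun s => exp (-A s) * g s) 0 s := fun s =>
    (((hA s).neg.exp).mul (hg s)).congr_deriv (by ring)
  have := is_const_of_deriv_eq_zero (fun s => (hconst s).differentiableAt)
    (fun s => (hconst s).deriv) t 0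
  calc g t = exp (A t) * (exp (-A t) * g t) := by
        rw [← mul_assoc, ← exp_add, add_neg_cancel, exp_zero, one_mul]
    _ = exp (A t - A 0) * g 0 := by rw [this, exp_sub, exp_neg]; ring

theorem pos_of_hasDerivAt_eq_mul {a g : ℝ → ℝ} (ha : Continuous a)
    (hg : ∀ t, HasDerivAt g (a t * g t) t) (h0 : 0 < g 0) (t : ℝ) : 0 < g t := by
  rw [eq_exp_sub_mul_of_hasDerivAt_eq_mul (fun s => (ha.integral_hasStrictDerivAt 0 s).hasDerivAt)
    hg t]
  positivity

section Riccati

variable {h : ℝ → ℝ} (hh : ∀ t, HasDerivAt h (h t ^ 2 - 1) t)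
include hh

theorem mem_Ioo_of_hasDerivAt_sq_sub_one (h0 : h 0 ∈ Ioo (-1) 1) (t : ℝ) :
    h t ∈ Ioo (-1) 1 := by
  have hc : Continuous h := continuous_iff_continuousAt.2 fun t => (hh t).continuousAt
  have hlow : 0 < 1 + h t := pos_of_hasDerivAt_eq_mul (a := fun t => h t - 1)
    (g := fun t => 1 + h t) (hc.sub continuous_const)
    (fun t => ((hh t).const_add 1).congr_deriv (by ring)) (by linarith [h0.1]) t
  have hup : 0 < 1 - h t := pos_of_hasDerivAt_eq_mul (a := fun t => 1 + h t)
    (g := fun t => 1 - h t) (continuous_const.add hc)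
    (fun t => ((hh t).const_sub 1).congr_deriv (by ring)) (by linarith [h0.2]) t
  constructor <;> linarith

theorem div_eq_exp_mul_of_hasDerivAt_sq_sub_one (h0 : h 0 ∈ Ioo (-1) 1) (t : ℝ) :
    (1 + h t) / (1 - h t) = exp (-2 * t) * ((1 + h 0) / (1 - h 0)) := by
  have hmem := mem_Ioo_of_hasDerivAt_sq_sub_one hh h0
  have hratio : ∀ s, HasDerivAt (fun s => (1 + h s) / (1 - h s))
      (-2 * ((1 + h s) / (1 - h s))) s := fun s => by
    have hpos : 0 < 1 - h s := by linarith [(hmem s).2]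
    refine (((hh s).const_add 1).div ((hh s).const_sub 1) hpos.ne').congr_deriv ?_
    field_simp
    ring
  simpa using eq_exp_sub_mul_of_hasDerivAt_eq_mul (A := fun s => -2 * s)
    (fun s => by simpa using (hasDerivAt_id s).const_mul (-2)) hratio t

theorem existsUnique_eq_zero_of_hasDerivAt_sq_sub_one (h0 : h 0 ∈ Ioo (-1) 1) :
    ∃! t, h t = 0 := by
  set r₀ := (1 + h 0) / (1 - h 0)
  have hr₀ : 0 < r₀ := div_pos (by linarith [h0.1]) (by linarith [h0.2])
  have hzero : ∀ t, h t = 0 ↔ exp (-2 * t) * r₀ = 1 := fun t => by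
    rw [← div_eq_exp_mul_of_hasDerivAt_sq_sub_one hh h0 t,
      div_eq_one_iff_eq (by linarith [(mem_Ioo_of_hasDerivAt_sq_sub_one hh h0 t).2])]
    constructor <;> intro <;> linarith
  refine ⟨log r₀ / 2, (hzero _).2 ?_, fun t ht => ?_⟩
  · rw [neg_mul, mul_div_cancel₀ _ two_ne_zero, exp_neg, exp_log hr₀, inv_mul_cancel₀ hr₀.ne']
  · have := (hzero t).1 ht
    rw [← exp_log hr₀, ← exp_add, exp_eq_one_iff] at this
    linarith

end Riccati

section HeightFlow

variable {E : Type*} [NormedAddCommGroup E] [InnerProductSpace ℝ E]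

theorem hasDerivAt_inner_of_hasDerivAt_heightFlow {e : E} (he : ‖e‖ = 1) {γ : ℝ → E}
    (hγ : ∀ t, HasDerivAt γ (-(e - ⟪e, γ t⟫ • γ t)) t) (t : ℝ) :
    HasDerivAt (fun t => ⟪e, γ t⟫) (⟪e, γ t⟫ ^ 2 - 1) t := by
  refine ((innerSL ℝ e).hasFDerivAt.comp_hasDerivAt t (hγ t)).congr_deriv ?_
  simp only [innerSL_apply_apply, inner_neg_right, inner_sub_right, inner_smul_right,
    real_inner_self_eq_norm_sq, he]
  ring

theorem real_inner_mem_Ioo_of_norm_eq_one {x y : E} (hx : ‖x‖ = 1) (hy : ‖y‖ = 1)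
    (hne : y ≠ x) (hne' : y ≠ -x) : ⟪x, y⟫ ∈ Ioo (-1) 1 := by
  refine ⟨?_, (inner_lt_one_iff_real_of_norm_eq_one hx hy).2 hne.symm⟩
  have := (inner_lt_one_iff_real_of_norm_eq_one hx (by rwa [norm_neg])).2
    (fun h => hne' (neg_eq_iff_eq_neg.1 h.symm))
  rw [inner_neg_right] at this
  linarith

end HeightFlow

theorem heightFlow_unique_equator_crossing_general {E : Type*}
    [NormedAddCommGroup E] [InnerProductSpace ℝ E]
    (e : E) (he : ‖e‖ = 1) (γ : ℝ → E)
    (hγ : ∀ t : ℝ, HasDerivAt γ (-(e - ⟪e, γ t⟫ • γ t)) t)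
    (h0 : ‖γ 0‖ = 1) (hne : γ 0 ≠ e) (hne' : γ 0 ≠ -e) :
    ∃! t₀ : ℝ, ⟪e, γ t₀⟫ = 0 :=
  existsUnique_eq_zero_of_hasDerivAt_sq_sub_one (hasDerivAt_inner_of_hasDerivAt_heightFlow he hγ)
    (real_inner_mem_Ioo_of_norm_eq_one he h0 hne hne')

/-- Every nonconstant solution of the height flow `γ' = -(e - ⟪e,γ⟫ • γ)` on the unit sphere
crosses the equator `{p : ‖p‖ = 1, ⟪e,p⟫ = 0}` at exactly one time. -/
theorem heightFlow_unique_equator_crossing {E : Type*}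
    [NormedAddCommGroup E] [InnerProductSpace ℝ E] [CompleteSpace E]
    (e : E) (he : ‖e‖ = 1) (γ : ℝ → E)
    (hγ : ∀ t : ℝ, HasDerivAt γ (-(e - ⟪e, γ t⟫ • γ t)) t)
    (h0 : ‖γ 0‖ = 1) (hne : γ 0 ≠ e) (hne' : γ 0 ≠ -e) :
    ∃! t₀ : ℝ, ⟪e, γ t₀⟫ = 0 :=
  heightFlow_unique_equator_crossing_general e he γ hγ h0 hne hne'
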